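/- arXiv:1307.6705 — 7 statements merged into one kernel-verified Lean document; each statement's English description precedes it below -/
import Mathlib

section
/- Let g : ℂ → ℂ be differentiable, let A(z) = α₁·z + α₂ with α₁ ≠ 0, and let h(z) = γ·g(A(z)) with γ ≠ 0. For a parameter λ ∈ ℂ, define the Kim fixed-point operator of a differentiable function f by O_f(z) = y − ((1 + λ·u²)/(1 − 2u))·f(y)/f′(z), where y = z − f(z)/f′(z) and u = f(y)/f(z). Then for every z ∈ ℂ such that all quantities involved are defined (i.e. g(z) ≠ 0, g′(z) ≠ 0, g(y_g) denominators and 1 − 2u_g ≠ 0 for the computation of O_g(z), and likewise for O_h at A⁻¹(z)), one has A(O_h(A⁻¹(z))) = O_g(z); that is, O_g and O_h are affine conjugated by A. -/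
/-! Both Newton's step and the correction factor of Kim's method are built from quotients
`f(·)/f(·)` and `f(·)/f′(·)`, so they are unchanged when `f` is scaled by `γ ≠ 0`; and the
chain rule `(f ∘ A)′ = α₁ · f′ ∘ A` makes every step taken for `f ∘ A` the pull-back by `A`
of the step taken for `f`. -/

/-- Kim's fixed-point operator (with η = μ = 0, parameter `lam`) applied to a
function `f`: `O_f(z) = y − ((1 + λu²)/(1 − 2u))·f(y)/f′(z)` where
`y = z − f(z)/f′(z)` and `u = f(y)/f(z)`. -/
noncomputable def kimOp (lam : ℂ) (f : ℂ → ℂ) (z : ℂ) : ℂ :=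
  let y := z - f z / deriv f z
  let u := f y / f z
  y - ((1 + lam * u ^ 2) / (1 - 2 * u)) * (f y / deriv f z)

theorem deriv_comp_mul_add {𝕜 : Type*} [NontriviallyNormedField 𝕜] (f : 𝕜 → 𝕜) (a b x : 𝕜) :
    deriv (fun w => f (a * w + b)) x = a * deriv f (a * x + b) :=
  (deriv_comp_mul_left a (fun w => f (w + b)) x).trans (by rw [deriv_comp_add_const, smul_eq_mul])

theorem kimOp_const_mul (lam c : ℂ) (hc : c ≠ 0) (f : ℂ → ℂ) :
    kimOp lam (fun w => c * f w) = kimOp lam f := by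
  funext z
  simp only [kimOp, deriv_const_mul_field', mul_div_mul_left _ _ hc]

theorem kimOp_comp_mul_add (lam : ℂ) (f : ℂ → ℂ) (a b : ℂ) (ha : a ≠ 0) (w : ℂ) :
    a * kimOp lam (fun w => f (a * w + b)) w + b = kimOp lam f (a * w + b) := by
  have mul_div_mul_cancel : ∀ x y : ℂ, a * (x / (a * y)) = x / y := fun x y => by
    rw [← mul_div_assoc, mul_div_mul_left _ _ ha]
  have newton_step : a * (w - f (a * w + b) / (a * deriv f (a * w + b))) + b
      = a * w + b - f (a * w + b) / deriv f (a * w + b) := by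
    rw [mul_sub, mul_div_mul_cancel]; ring
  simp only [kimOp, deriv_comp_mul_add]
  rw [newton_step, mul_sub, mul_left_comm, mul_div_mul_cancel]
  linear_combination newton_step

theorem kim_scaling_general (lam : ℂ) (g : ℂ → ℂ)
    (α₁ α₂ γ : ℂ) (hα : α₁ ≠ 0) (hγ : γ ≠ 0)
    (A : ℂ → ℂ) (hA : ∀ z, A z = α₁ * z + α₂)
    (Ainv : ℂ → ℂ) (hAinv : ∀ z, Ainv z = (z - α₂) / α₁)
    (h : ℂ → ℂ) (hh : ∀ z, h z = γ * g (A z))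
    (z : ℂ) :
    A (kimOp lam h (Ainv z)) = kimOp lam g z := by
  have h_eq : h = fun w => γ * g (α₁ * w + α₂) := funext fun w => by rw [hh, hA]
  have hA_Ainv : α₁ * Ainv z + α₂ = z := by
    rw [hAinv, mul_div_cancel₀ _ hα, sub_add_cancel]
  rw [hA, h_eq, kimOp_const_mul lam γ hγ, kimOp_comp_mul_add lam g α₁ α₂ hα, hA_Ainv]

/-- Scaling theorem: Kim's operators on `g` and on `h = γ·(g ∘ A)` are affine
conjugated by the affine map `A(z) = α₁z + α₂`. -/
theorem kim_scaling (lam : ℂ) (g : ℂ → ℂ) (hg : Differentiable ℂ g)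
    (α₁ α₂ γ : ℂ) (hα : α₁ ≠ 0) (hγ : γ ≠ 0)
    (A : ℂ → ℂ) (hA : ∀ z, A z = α₁ * z + α₂)
    (Ainv : ℂ → ℂ) (hAinv : ∀ z, Ainv z = (z - α₂) / α₁)
    (h : ℂ → ℂ) (hh : ∀ z, h z = γ * g (A z))
    (z : ℂ)
    (hgz : g z ≠ 0) (hg'z : deriv g z ≠ 0)
    (hgu : 1 - 2 * (g (z - g z / deriv g z) / g z) ≠ 0)
    (hhz : h (Ainv z) ≠ 0) (hh'z : deriv h (Ainv z) ≠ 0)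
    (hhu : 1 - 2 * (h (Ainv z - h (Ainv z) / deriv h (Ainv z)) / h (Ainv z)) ≠ 0) :
    A (kimOp lam h (Ainv z)) = kimOp lam g z :=
  kim_scaling_general lam g α₁ α₂ γ hα hγ A hA Ainv hAinv h hh z
end

section
/- Let a, b ∈ ℂ with a ≠ b, let p(z) = (z − a)(z − b), and let M(u) = (u − a)/(u − b) be the Möbius map with inverse M⁻¹(u) = (u·b − a)/(u − 1). Let K_p denote the Kim fixed-point operator with parameter λ applied to p, i.e. K_p(z) = y − ((1 + λ·u²)/(1 − 2u))·p(y)/p′(z) with y = z − p(z)/p′(z) and u = p(y)/p(z). Then for every z ∈ ℂ for which all the intermediate expressions are defined (all relevant denominators nonzero, including −1 − 4z − 6z² − 4z³ + (λ−1)z⁴ ≠ 0), one has M(K_p(M⁻¹(z))) = −z⁴·((1−λ) + 4z + 6z² + 4z³ + z⁴)/(−1 − 4z − 6z² − 4z³ + (λ−1)z⁴). -/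
namespace KimQuadratic

variable {a b : ℂ} {p : ℂ → ℂ} {x t : ℂ}

lemma deriv_eq (hp : ∀ u, p u = (u - a) * (u - b)) (x : ℂ) :
    deriv p x = (x - a) + (x - b) := by
  rw [funext hp]
  exact (((hasDerivAt_id' x).sub_const a).mul ((hasDerivAt_id' x).sub_const b)).deriv.trans
    (by ring)

lemma apply_eq_mul_sq (hp : ∀ u, p u = (u - a) * (u - b)) (hx : x - a = t * (x - b)) :
    p x = t * (x - b) ^ 2 := by
  rw [hp, hx]; ring

lemma deriv_eq_mul (hp : ∀ u, p u = (u - a) * (u - b)) (hx : x - a = t * (x - b)) :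
    deriv p x = (t + 1) * (x - b) := by
  rw [deriv_eq hp, hx]; ring

lemma newton_sub_right (hp : ∀ u, p u = (u - a) * (u - b)) (hx : x - a = t * (x - b))
    (ht : t + 1 ≠ 0) :
    x - p x / deriv p x - b = (x - b) / (t + 1) := by
  rw [apply_eq_mul_sq hp hx, deriv_eq_mul hp hx]
  field_simp
  ring

lemma newton_sub_left (hp : ∀ u, p u = (u - a) * (u - b)) (hx : x - a = t * (x - b))
    (ht : t + 1 ≠ 0) :
    x - p x / deriv p x - a = t ^ 2 * (x - p x / deriv p x - b) := by
  have hsplit : x - p x / deriv p x - a = (x - p x / deriv p x - b) + (x - a) - (x - b) := by ring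
  rw [hsplit, newton_sub_right hp hx ht, hx]
  field_simp
  ring

lemma newton_ratio (hp : ∀ u, p u = (u - a) * (u - b)) (hx : x - a = t * (x - b))
    (hxb : x - b ≠ 0) (ht : t + 1 ≠ 0) :
    p (x - p x / deriv p x) / p x = t / (t + 1) ^ 2 := by
  rw [apply_eq_mul_sq hp (newton_sub_left hp hx ht), newton_sub_right hp hx ht,
    apply_eq_mul_sq hp hx]
  rcases eq_or_ne t 0 with rfl | ht0
  · simp
  · field_simp

lemma one_sub_two_mul_div_sq (ht : t + 1 ≠ 0) :
    1 - 2 * (t / (t + 1) ^ 2) = (t ^ 2 + 1) / (t + 1) ^ 2 := by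
  field_simp; ring

lemma kimOp_sub_right (lam : ℂ) (hp : ∀ u, p u = (u - a) * (u - b)) (hx : x - a = t * (x - b))
    (hxb : x - b ≠ 0) (ht : t + 1 ≠ 0) (ht2 : t ^ 2 + 1 ≠ 0) :
    kimOp lam p x - b =
      ((t + 1) ^ 4 - lam * t ^ 4) * ((x - b) / ((t + 1) ^ 5 * (t ^ 2 + 1))) := by
  simp only [kimOp]
  rw [newton_ratio hp hx hxb ht, one_sub_two_mul_div_sq ht,
    apply_eq_mul_sq hp (newton_sub_left hp hx ht), sub_right_comm, newton_sub_right hp hx ht,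
    deriv_eq_mul hp hx]
  field_simp
  ring

lemma kimOp_sub_left (lam : ℂ) (hp : ∀ u, p u = (u - a) * (u - b)) (hx : x - a = t * (x - b))
    (hxb : x - b ≠ 0) (ht : t + 1 ≠ 0) (ht2 : t ^ 2 + 1 ≠ 0) :
    kimOp lam p x - a =
      t ^ 4 * ((t + 1) ^ 4 - lam) * ((x - b) / ((t + 1) ^ 5 * (t ^ 2 + 1))) := by
  simp only [kimOp]
  rw [newton_ratio hp hx hxb ht, one_sub_two_mul_div_sq ht,
    apply_eq_mul_sq hp (newton_sub_left hp hx ht), sub_right_comm, newton_sub_left hp hx ht,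
    newton_sub_right hp hx ht, deriv_eq_mul hp hx]
  field_simp
  ring

end KimQuadratic

theorem kim_moebius_conjugation_general (lam a b : ℂ)
    (p : ℂ → ℂ) (hp : ∀ u, p u = (u - a) * (u - b))
    (M : ℂ → ℂ) (hM : ∀ u, M u = (u - a) / (u - b))
    (Minv : ℂ → ℂ) (hMinv : ∀ u, Minv u = (u * b - a) / (u - 1))
    (z : ℂ) (hz1 : z - 1 ≠ 0)
    (hpz : p (Minv z) ≠ 0) (hp' : deriv p (Minv z) ≠ 0)
    (hu : 1 - 2 * (p (Minv z - p (Minv z) / deriv p (Minv z)) / p (Minv z)) ≠ 0) :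
    M (kimOp lam p (Minv z)) =
      -z ^ 4 * ((1 - lam) + 4 * z + 6 * z ^ 2 + 4 * z ^ 3 + z ^ 4) /
        (-1 - 4 * z - 6 * z ^ 2 - 4 * z ^ 3 + (lam - 1) * z ^ 4) := by
  open KimQuadratic in
  have hw : Minv z - a = z * (Minv z - b) := by
    rw [hMinv]; field_simp; ring
  have hwb : Minv z - b ≠ 0 := fun h => hpz (by rw [apply_eq_mul_sq hp hw, h]; ring)
  have hz : z + 1 ≠ 0 := left_ne_zero_of_mul (deriv_eq_mul hp hw ▸ hp')
  have hz2 : z ^ 2 + 1 ≠ 0 := by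
    rw [newton_ratio hp hw hwb hz, one_sub_two_mul_div_sq hz] at hu
    exact left_ne_zero_of_mul hu
  rw [hM, kimOp_sub_left lam hp hw hwb hz hz2, kimOp_sub_right lam hp hw hwb hz hz2,
    mul_div_mul_right _ _ (div_ne_zero hwb (mul_ne_zero (pow_ne_zero 5 hz) hz2)),
    ← neg_div_neg_eq]
  ring

/-- Möbius conjugation of Kim's operator on the quadratic `p(z) = (z−a)(z−b)`
yields the rational map
`O_p(z,λ) = −z⁴((1−λ)+4z+6z²+4z³+z⁴)/(−1−4z−6z²−4z³+(λ−1)z⁴)`. -/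
theorem kim_moebius_conjugation (lam a b : ℂ) (hab : a ≠ b)
    (p : ℂ → ℂ) (hp : ∀ u, p u = (u - a) * (u - b))
    (M : ℂ → ℂ) (hM : ∀ u, M u = (u - a) / (u - b))
    (Minv : ℂ → ℂ) (hMinv : ∀ u, Minv u = (u * b - a) / (u - 1))
    (z : ℂ) (hz1 : z - 1 ≠ 0)
    (hpz : p (Minv z) ≠ 0) (hp' : deriv p (Minv z) ≠ 0)
    (hu : 1 - 2 * (p (Minv z - p (Minv z) / deriv p (Minv z)) / p (Minv z)) ≠ 0)
    (hKb : kimOp lam p (Minv z) - b ≠ 0)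
    (hden : -1 - 4 * z - 6 * z ^ 2 - 4 * z ^ 3 + (lam - 1) * z ^ 4 ≠ 0) :
    M (kimOp lam p (Minv z)) =
      -z ^ 4 * ((1 - lam) + 4 * z + 6 * z ^ 2 + 4 * z ^ 3 + z ^ 4) /
        (-1 - 4 * z - 6 * z ^ 2 - 4 * z ^ 3 + (lam - 1) * z ^ 4) :=
  kim_moebius_conjugation_general lam a b p hp M hM Minv hMinv z hz1 hpz hp' hu
end

section
/- For every λ ∈ ℂ with λ ≠ 16, the complex derivative of the map z ↦ O_p(z,λ) at z = 1 equals 64/(16 − λ). -/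
/-- The rational operator of Kim's family (η = μ = 0, parameter `lam`) on
quadratic polynomials, after Möbius conjugation:
`O_p(z,λ) = −z⁴((1−λ)+4z+6z²+4z³+z⁴)/(−1−4z−6z²−4z³+(λ−1)z⁴)`. -/
noncomputable def Op (lam z : ℂ) : ℂ :=
  -z ^ 4 * ((1 - lam) + 4 * z + 6 * z ^ 2 + 4 * z ^ 3 + z ^ 4) /
    (-1 - 4 * z - 6 * z ^ 2 - 4 * z ^ 3 + (lam - 1) * z ^ 4)

/-! Numerator and denominator factor as `z⁴((1+z)⁴ - λ)` and `(1+z)⁴ - λz⁴`. Both equal `16 - λ`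
at `z = 1` (a fixed point of `Op lam`), so the quotient rule collapses to `(N' - D') / D`. -/

theorem Op_eq_factored (lam z : ℂ) :
    Op lam z = z ^ 4 * ((1 + z) ^ 4 - lam) / ((1 + z) ^ 4 - lam * z ^ 4) := by
  rw [Op, ← neg_div_neg_eq]
  congr 1 <;> ring

theorem HasDerivAt.div_of_eq {𝕜 : Type*} [NontriviallyNormedField 𝕜] {f g : 𝕜 → 𝕜}
    {f' g' a : 𝕜} (hf : HasDerivAt f f' a) (hg : HasDerivAt g g' a) (hfg : f a = g a)
    (hg0 : g a ≠ 0) : HasDerivAt (fun x => f x / g x) ((f' - g') / g a) a := by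
  refine (hf.div hg hg0).congr_deriv ?_
  rw [hfg]
  field_simp

/-- For `λ ≠ 16`, the derivative of `O_p(·,λ)` at `z = 1` equals `64/(16 − λ)`. -/
theorem deriv_Op_at_one (lam : ℂ) (hlam : lam ≠ 16) :
    deriv (fun z => Op lam z) 1 = 64 / (16 - lam) := by
  have hz : HasDerivAt (fun z : ℂ => z) 1 1 := hasDerivAt_id 1
  have hN : HasDerivAt (fun z : ℂ => z ^ 4 * ((1 + z) ^ 4 - lam)) (96 - 4 * lam) 1 := by
    refine ((hz.pow 4).mul (((hz.const_add 1).pow 4).sub_const lam)).congr_deriv ?_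
    norm_num
    ring
  have hD : HasDerivAt (fun z : ℂ => (1 + z) ^ 4 - lam * z ^ 4) (32 - 4 * lam) 1 := by
    refine (((hz.const_add 1).pow 4).sub ((hz.pow 4).const_mul lam)).congr_deriv ?_
    norm_num
    ring
  have hD1 : (1 + 1 : ℂ) ^ 4 - lam * 1 ^ 4 ≠ 0 := by
    norm_num
    exact sub_ne_zero.mpr hlam.symm
  simp_rw [Op_eq_factored]
  rw [(hN.div_of_eq hD (by ring) hD1).deriv]
  congr 1 <;> ring
end

section
/- If λ ∈ ℂ satisfies |λ − 16| = 64, then the strange fixed point z = 1 of O_p(·,λ) is parabolic (neutral): the complex derivative of z ↦ O_p(z,λ) at z = 1 has modulus exactly 1. -/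
theorem HasDerivAt.div_of_apply_eq {𝕜 : Type*} [NontriviallyNormedField 𝕜] {f g : 𝕜 → 𝕜}
    {f' g' a : 𝕜} (hf : HasDerivAt f f' a) (hg : HasDerivAt g g' a) (hfg : f a = g a)
    (hg₀ : g a ≠ 0) : HasDerivAt (fun x => f x / g x) ((f' - g') / g a) a := by
  refine (hf.div hg hg₀).congr_deriv ?_
  rw [hfg]
  field_simp

theorem Op_eq_div (lam : ℂ) :
    Op lam = fun z => -z ^ 4 * ((1 + z) ^ 4 - lam) / (lam * z ^ 4 - (1 + z) ^ 4) := by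
  funext z
  unfold Op
  congr 1 <;> ring

theorem hasDerivAt_Op_one {lam : ℂ} (hlam : lam ≠ 16) :
    HasDerivAt (Op lam) (-64 / (lam - 16)) 1 := by
  have hpow : HasDerivAt (fun z : ℂ => (1 + z) ^ 4) 32 1 :=
    (((hasDerivAt_id (1 : ℂ)).const_add 1).fun_pow 4).congr_deriv (by norm_num)
  have hnum : HasDerivAt (fun z : ℂ => -z ^ 4 * ((1 + z) ^ 4 - lam)) (4 * lam - 96) 1 :=
    ((hasDerivAt_pow 4 (1 : ℂ)).fun_neg.fun_mul (hpow.sub_const lam)).congr_deriv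
      (by norm_num; ring)
  have hden : HasDerivAt (fun z : ℂ => lam * z ^ 4 - (1 + z) ^ 4) (4 * lam - 32) 1 :=
    (((hasDerivAt_pow 4 (1 : ℂ)).const_mul lam).fun_sub hpow).congr_deriv (by ring)
  have hden₀ : lam * 1 ^ 4 - (1 + 1) ^ 4 ≠ 0 := by
    norm_num [sub_eq_zero, hlam]
  rw [Op_eq_div]
  exact (hnum.div_of_apply_eq hden (by norm_num) hden₀).congr_deriv (by norm_num)

/-- If `|λ − 16| = 64` then `z = 1` is a parabolic (neutral) fixed point of
`O_p(·,λ)`. -/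
theorem one_parabolic (lam : ℂ) (hlam : ‖lam - 16‖ = 64) :
    ‖deriv (fun z => Op lam z) 1‖ = 1 := by
  have hlam₀ : lam ≠ 16 := by
    rintro rfl
    norm_num at hlam
  rw [(hasDerivAt_Op_one hlam₀).deriv, norm_div, hlam, norm_neg]
  norm_num
end

section
/- For λ = 1, the set of free critical points of O_p(·,1) is {−1, −1/2 + (√3/2)·i, −1/2 − (√3/2)·i}: for z₀ ∈ ℂ with z₀ ≠ 0 and (1+2z₀)(1+2z₀+2z₀²) ≠ 0, the complex derivative of z ↦ O_p(z,1) at z₀ equals 0 if and only if z₀ ∈ {−1, −1/2 + (√3/2)·i, −1/2 − (√3/2)·i}. -/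
/-!
For `λ = 1` the operator is `z ↦ z⁴((1+z)⁴ - 1)/((1+z)⁴ - z⁴)`, and `(1+z)⁴ - z⁴ = (1+2z)(1+2z+2z²)`.
By the quotient rule its derivative is `20 z⁴ (1+z)⁴ (z²+z+1) / ((1+z)⁴ - z⁴)²`, so away from `0`
and the poles it vanishes exactly at `z = -1` and at the primitive cube roots of unity.
-/

open Complex

lemma Op_one_eq : Op 1 = fun z => z ^ 4 * ((1 + z) ^ 4 - 1) / ((1 + z) ^ 4 - z ^ 4) := by
  funext z
  rw [Op, ← neg_div_neg_eq]
  ring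

lemma hasDerivAt_Op_one_s14 {z : ℂ} (hz : (1 + z) ^ 4 - z ^ 4 ≠ 0) :
    HasDerivAt (Op 1) (20 * z ^ 4 * (1 + z) ^ 4 * (z ^ 2 + z + 1) / ((1 + z) ^ 4 - z ^ 4) ^ 2) z := by
  have hshift := ((hasDerivAt_id' z).const_add 1).fun_pow 4
  have hnum := (hasDerivAt_pow 4 z).fun_mul (hshift.sub_const 1)
  have hden := hshift.fun_sub (hasDerivAt_pow 4 z)
  rw [Op_one_eq]
  refine (hnum.fun_div hden hz).congr_deriv ?_
  norm_num
  ring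

lemma sq_add_self_add_one_eq_zero_iff (z : ℂ) :
    z ^ 2 + z + 1 = 0 ↔
      z = -(1 / 2) + ((Real.sqrt 3 : ℝ) / 2 : ℝ) * I ∨
        z = -(1 / 2) - ((Real.sqrt 3 : ℝ) / 2 : ℝ) * I := by
  have hsqrt : ((Real.sqrt 3 : ℝ) : ℂ) ^ 2 = 3 := by
    norm_cast
    exact Real.sq_sqrt (by norm_num)
  have hdiscrim : discrim (1 : ℂ) 1 1 = (Real.sqrt 3 * I) * (Real.sqrt 3 * I) := by
    rw [discrim]
    linear_combination (-I ^ 2) * hsqrt - 3 * I_sq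
  rw [show z ^ 2 + z + 1 = 1 * (z * z) + 1 * z + 1 by ring,
    quadratic_eq_zero_iff one_ne_zero hdiscrim]
  push_cast
  ring_nf

/-- For `λ = 1`, the free critical points of `O_p(·,1)` are
`−1`, `−1/2 + (√3/2)i` and `−1/2 − (√3/2)i`. -/
theorem free_critical_points_lam_one (z₀ : ℂ) (hz₀ : z₀ ≠ 0)
    (hden : (1 + 2 * z₀) * (1 + 2 * z₀ + 2 * z₀ ^ 2) ≠ 0) :
    deriv (fun z => Op 1 z) z₀ = 0 ↔
      z₀ = -1 ∨ z₀ = -(1 / 2) + ((Real.sqrt 3 : ℝ) / 2 : ℝ) * Complex.I ∨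
        z₀ = -(1 / 2) - ((Real.sqrt 3 : ℝ) / 2 : ℝ) * Complex.I := by
  have hD : (1 + z₀) ^ 4 - z₀ ^ 4 ≠ 0 := by
    rwa [show (1 + z₀) ^ 4 - z₀ ^ 4 = (1 + 2 * z₀) * (1 + 2 * z₀ + 2 * z₀ ^ 2) by ring]
  rw [(hasDerivAt_Op_one_s14 hD).deriv, ← sq_add_self_add_one_eq_zero_iff, ← add_eq_zero_iff_eq_neg']
  simp [hD, hz₀]
end

section
/- For λ = 16, the set of free critical points of O_p(·,16) is {−1, 1, −1/3 + (2√2/3)·i, −1/3 − (2√2/3)·i}: for z₀ ∈ ℂ with z₀ ≠ 0 and 1 + 4z₀ + 6z₀² + 4z₀³ − 15z₀⁴ ≠ 0, the complex derivative of z ↦ O_p(z,16) at z₀ equals 0 if and only if z₀ ∈ {−1, 1, −1/3 + (2√2/3)·i, −1/3 − (2√2/3)·i}. -/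
def opCriticalFactor (lam z : ℂ) : ℂ :=
  (1 + z) ^ 4 - lam * (1 - z + z ^ 2 - z ^ 3 + z ^ 4)

lemma Op_eq (lam z : ℂ) :
    Op lam z = z ^ 4 * (lam - (1 + z) ^ 4) / (lam * z ^ 4 - (1 + z) ^ 4) := by
  unfold Op
  ring

lemma hasDerivAt_Op {lam z : ℂ} (hD : lam * z ^ 4 - (1 + z) ^ 4 ≠ 0) :
    HasDerivAt (Op lam)
      (4 * z ^ 3 * (1 + z) ^ 4 * opCriticalFactor lam z / (lam * z ^ 4 - (1 + z) ^ 4) ^ 2) z := by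
  have hw : HasDerivAt (fun z : ℂ => (1 + z) ^ 4) (4 * (1 + z) ^ 3) z :=
    (((hasDerivAt_id' z).const_add 1).pow 4).congr_deriv (by push_cast; ring)
  have hN : HasDerivAt (fun z : ℂ => z ^ 4 * (lam - (1 + z) ^ 4))
      (4 * z ^ 3 * (lam - (1 + z) ^ 4) + z ^ 4 * -(4 * (1 + z) ^ 3)) z :=
    ((hasDerivAt_pow 4 z).mul (hw.const_sub lam)).congr_deriv (by push_cast; ring)
  have hDen : HasDerivAt (fun z : ℂ => lam * z ^ 4 - (1 + z) ^ 4)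
      (lam * (4 * z ^ 3) - 4 * (1 + z) ^ 3) z :=
    ((hasDerivAt_pow 4 z).const_mul lam).sub hw
  rw [show Op lam = _ from funext (Op_eq lam)]
  exact (hN.div hDen hD).congr_deriv (by unfold opCriticalFactor; ring)

lemma deriv_Op_eq_zero_iff {lam z : ℂ} (hz : z ≠ 0) (hD : lam * z ^ 4 - (1 + z) ^ 4 ≠ 0) :
    deriv (Op lam) z = 0 ↔ z = -1 ∨ opCriticalFactor lam z = 0 := by
  rw [(hasDerivAt_Op hD).deriv, div_eq_zero_iff, or_iff_left (pow_ne_zero 2 hD)]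
  simp only [mul_eq_zero, pow_eq_zero_iff three_ne_zero, pow_eq_zero_iff four_ne_zero,
    OfNat.ofNat_ne_zero, hz, false_or, add_eq_zero_iff_eq_neg']

lemma opCriticalFactor_sixteen (z : ℂ) :
    opCriticalFactor 16 z = -5 * (z - 1) ^ 2 * (3 * (z * z) + 2 * z + 3) := by
  unfold opCriticalFactor
  ring

lemma discrim_three_two_three :
    discrim (3 : ℂ) 2 3 = (4 * Real.sqrt 2 * Complex.I) * (4 * Real.sqrt 2 * Complex.I) := by
  have hs : ((Real.sqrt 2 : ℝ) : ℂ) ^ 2 = 2 := by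
    rw [← Complex.ofReal_pow, Real.sq_sqrt zero_le_two, Complex.ofReal_ofNat]
  rw [discrim]
  linear_combination (-16 : ℂ) * Complex.I ^ 2 * hs - 32 * Complex.I_sq

/-- For `λ = 16`, the free critical points of `O_p(·,16)` are
`−1`, `1`, `−1/3 + (2√2/3)i` and `−1/3 − (2√2/3)i`. -/
theorem free_critical_points_lam_sixteen (z₀ : ℂ) (hz₀ : z₀ ≠ 0)
    (hden : 1 + 4 * z₀ + 6 * z₀ ^ 2 + 4 * z₀ ^ 3 - 15 * z₀ ^ 4 ≠ 0) :
    deriv (fun z => Op 16 z) z₀ = 0 ↔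
      z₀ = -1 ∨ z₀ = 1 ∨
        z₀ = -(1 / 3) + ((2 * Real.sqrt 2 / 3 : ℝ) : ℂ) * Complex.I ∨
        z₀ = -(1 / 3) - ((2 * Real.sqrt 2 / 3 : ℝ) : ℂ) * Complex.I := by
  have hD : (16 : ℂ) * z₀ ^ 4 - (1 + z₀) ^ 4 ≠ 0 := fun h ↦ hden (by linear_combination -h)
  have hquad := quadratic_eq_zero_iff (by norm_num) discrim_three_two_three z₀
  have hplus : (-2 + 4 * Real.sqrt 2 * Complex.I) / (2 * 3) =
      -(1 / 3) + ((2 * Real.sqrt 2 / 3 : ℝ) : ℂ) * Complex.I := by push_cast; ring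
  have hminus : (-2 - 4 * Real.sqrt 2 * Complex.I) / (2 * 3) =
      -(1 / 3) - ((2 * Real.sqrt 2 / 3 : ℝ) : ℂ) * Complex.I := by push_cast; ring
  rw [deriv_Op_eq_zero_iff hz₀ hD, opCriticalFactor_sixteen]
  simp only [mul_eq_zero, hquad, pow_eq_zero_iff (n := 2) two_ne_zero, sub_eq_zero,
    show (-5 : ℂ) ≠ 0 by norm_num, false_or]
  rw [hplus, hminus]
end

section
/- The fixed points of O_p(·,λ) in ℂ are z = 0, z = 1 (when λ ≠ 16), and the six roots of a degree-six polynomial: for every λ ∈ ℂ and every z ∈ ℂ with −1 − 4z − 6z² − 4z³ + (λ−1)z⁴ ≠ 0, one has O_p(z,λ) = z if and only if z·(z − 1)·(z⁶ + 5z⁵ + 11z⁴ + (λ+14)z³ + 11z² + 5z + 1) = 0. -/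
/-- The fixed points of `O_p(·,λ)` in `ℂ` are `z = 0`, `z = 1` and the roots of
a degree-six polynomial. -/
theorem fixed_points_Op (lam z : ℂ)
    (hden : -1 - 4 * z - 6 * z ^ 2 - 4 * z ^ 3 + (lam - 1) * z ^ 4 ≠ 0) :
    Op lam z = z ↔
      z * (z - 1) *
        (z ^ 6 + 5 * z ^ 5 + 11 * z ^ 4 + (lam + 14) * z ^ 3 +
          11 * z ^ 2 + 5 * z + 1) = 0 := by
  have numerator_sub_mul_denominator :
      -z ^ 4 * ((1 - lam) + 4 * z + 6 * z ^ 2 + 4 * z ^ 3 + z ^ 4) -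
          z * (-1 - 4 * z - 6 * z ^ 2 - 4 * z ^ 3 + (lam - 1) * z ^ 4) =
        -(z * (z - 1) *
          (z ^ 6 + 5 * z ^ 5 + 11 * z ^ 4 + (lam + 14) * z ^ 3 +
            11 * z ^ 2 + 5 * z + 1)) := by
    ring
  rw [Op, div_eq_iff hden, ← sub_eq_zero, numerator_sub_mul_denominator, neg_eq_zero]
end
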